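/- arXiv:1703.05049 — 3 statements merged into one kernel-verified Lean document; each statement's English description precedes it below -/
import Mathlib

section
/- There exists a constant c > 0 such that for all x ≥ 0, Σ_{n≥0} (1/(n+1)^{3/2}) (1 − e^{−x(n+1)}) ≤ c √x. -/
/-!
Since `1 - e^{-t} ≤ min 1 t`, the `n`-th term is bounded both by `(n+1)^{-3/2}` and by
`y (n+1)^{-1/2}`, where `y = min 1 x`. Splitting the series at `N = ⌈1/y⌉`, telescoping bounds the
first `N` terms by `2 y √N` and the tail by `2 / √N`; since `y N ∈ [1, 2]`, both are `O(√y)`.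
-/

open Real Finset

lemma rpow_three_halves {t : ℝ} (ht : 0 ≤ t) : t ^ ((3 : ℝ) / 2) = t * √t := by
  rw [show (3 : ℝ) / 2 = 1 + 1 / 2 by norm_num, rpow_add' ht (by norm_num), rpow_one,
    sqrt_eq_rpow]

lemma summable_one_div_nat_add_one_rpow_three_halves :
    Summable fun n : ℕ => 1 / ((n : ℝ) + 1) ^ ((3 : ℝ) / 2) := by
  simpa using (summable_nat_add_iff 1).2
    (summable_one_div_nat_rpow.2 (show (1 : ℝ) < 3 / 2 by norm_num))

lemma one_div_sqrt_add_one_le {t : ℝ} (ht : 0 ≤ t) : 1 / √(t + 1) ≤ 2 * (√(t + 1) - √t) := by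
  have hs : √t ≤ √(t + 1) := sqrt_le_sqrt (by linarith)
  have hs₀ : 0 < √(t + 1) := sqrt_pos.2 (by linarith)
  have hsq : √(t + 1) ^ 2 - √t ^ 2 = 1 := by
    rw [sq_sqrt ht, sq_sqrt (by linarith)]; ring
  rw [div_le_iff₀ hs₀]
  nlinarith

lemma sum_range_one_div_sqrt_le (N : ℕ) : ∑ n ∈ range N, 1 / √((n : ℝ) + 1) ≤ 2 * √N := by
  calc ∑ n ∈ range N, 1 / √((n : ℝ) + 1)
      ≤ ∑ n ∈ range N, 2 * (√((n + 1 : ℕ) : ℝ) - √(n : ℝ)) :=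
        sum_le_sum fun n _ => by simpa using one_div_sqrt_add_one_le n.cast_nonneg
    _ = 2 * √N := by rw [← mul_sum, sum_range_sub (fun n : ℕ => √(n : ℝ))]; simp

lemma one_div_add_one_rpow_three_halves_le {t : ℝ} (ht : 0 < t) :
    1 / (t + 1) ^ ((3 : ℝ) / 2) ≤ 2 * (1 / √t - 1 / √(t + 1)) := by
  set s := √t
  set r := √(t + 1)
  have hs₀ : 0 < s := sqrt_pos.2 ht
  have hsr : s ≤ r := sqrt_le_sqrt (by linarith)
  have hr₀ : 0 < r := hs₀.trans_le hsr
  have hr₂ : r ^ 2 = t + 1 := sq_sqrt (by linarith)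
  have hdiff : 1 / s - 1 / r = 1 / (s * r * (r + s)) := by
    have : r ^ 2 - s ^ 2 = 1 := by rw [hr₂, sq_sqrt ht.le]; ring
    field_simp
    linear_combination this
  have h32 : (t + 1) ^ ((3 : ℝ) / 2) = r ^ 2 * r := by rw [rpow_three_halves (by linarith), hr₂]
  calc 1 / (t + 1) ^ ((3 : ℝ) / 2) = 2 * (1 / (2 * (r ^ 2 * r))) := by rw [h32]; field_simp
    _ ≤ 2 * (1 / (s * r * (r + s))) := by
        refine mul_le_mul_of_nonneg_left (one_div_le_one_div_of_le (by positivity) ?_) zero_le_two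
        nlinarith [mul_le_mul_of_nonneg_left hsr (mul_nonneg hs₀.le hr₀.le)]
    _ = 2 * (1 / s - 1 / r) := by rw [hdiff]

lemma tsum_one_div_nat_add_rpow_three_halves_le {N : ℕ} (hN : 0 < N) :
    ∑' n : ℕ, 1 / (((n + N : ℕ) : ℝ) + 1) ^ ((3 : ℝ) / 2) ≤ 2 / √N := by
  refine Real.tsum_le_of_sum_range_le (fun n => by positivity) fun M => ?_
  set b : ℕ → ℝ := fun n => 1 / √((n + N : ℕ) : ℝ)
  calc ∑ n ∈ range M, 1 / (((n + N : ℕ) : ℝ) + 1) ^ ((3 : ℝ) / 2)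
      ≤ ∑ n ∈ range M, 2 * (b n - b (n + 1)) := sum_le_sum fun n _ => by
        have h := one_div_add_one_rpow_three_halves_le (t := ((n + N : ℕ) : ℝ)) (by positivity)
        simp only [b]
        push_cast at h ⊢
        rwa [add_right_comm (n : ℝ) 1]
    _ = 2 * (b 0 - b M) := by rw [← mul_sum, sum_range_sub']
    _ ≤ 2 * b 0 := by linarith [show 0 ≤ b M by positivity]
    _ = 2 / √N := by simp [b, div_eq_mul_inv]

lemma tsum_le_two_mul_sqrt_add_two_div_sqrt {f : ℕ → ℝ} {y : ℝ} (hf₀ : ∀ n, 0 ≤ f n)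
    (hf_rpow : ∀ n, f n ≤ 1 / ((n : ℝ) + 1) ^ ((3 : ℝ) / 2))
    (hf_sqrt : ∀ n, f n ≤ y * (1 / √((n : ℝ) + 1))) {N : ℕ} (hN : 0 < N) :
    ∑' n, f n ≤ 2 * y * √N + 2 / √N := by
  have hy : 0 ≤ y := by simpa using (hf₀ 0).trans (hf_sqrt 0)
  have hf : Summable f :=
    summable_one_div_nat_add_one_rpow_three_halves.of_nonneg_of_le hf₀ hf_rpow
  have head : ∑ n ∈ range N, f n ≤ 2 * y * √N :=
    calc ∑ n ∈ range N, f n ≤ y * ∑ n ∈ range N, 1 / √((n : ℝ) + 1) := by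
          rw [mul_sum]; exact sum_le_sum fun n _ => hf_sqrt n
      _ ≤ y * (2 * √N) := by gcongr; exact sum_range_one_div_sqrt_le N
      _ = 2 * y * √N := by ring
  have tail : ∑' n, f (n + N) ≤ 2 / √N :=
    calc ∑' n, f (n + N) ≤ ∑' n : ℕ, 1 / (((n + N : ℕ) : ℝ) + 1) ^ ((3 : ℝ) / 2) :=
          ((summable_nat_add_iff N).2 hf).tsum_le_tsum (fun n => hf_rpow (n + N))
            ((summable_nat_add_iff N).2 summable_one_div_nat_add_one_rpow_three_halves)
      _ ≤ 2 / √N := tsum_one_div_nat_add_rpow_three_halves_le hN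
  rw [← hf.sum_add_tsum_nat_add N]
  exact add_le_add head tail

lemma two_mul_mul_sqrt_add_two_div_sqrt_le {y N : ℝ} (hy : 0 ≤ y) (hN : 0 < N)
    (h₁ : 1 / 4 ≤ y * N) (h₂ : y * N ≤ 4) : 2 * y * √N + 2 / √N ≤ 5 * √y := by
  have hr : 0 < √N := sqrt_pos.2 hN
  have hu : (√y * √N) ^ 2 = y * N := by rw [mul_pow, sq_sqrt hy, sq_sqrt hN.le]
  have hu₀ : 0 ≤ √y * √N := by positivity
  have hu₁ : 1 / 2 ≤ √y * √N := by nlinarith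
  have hu₂ : √y * √N ≤ 2 := by nlinarith
  -- with `u = √(y N)`, the claim reads `2 u² - 5 u + 2 ≤ 0`, i.e. `(2 u - 1) (u - 2) ≤ 0`
  have key : 5 * √y - (2 * y * √N + 2 / √N) = (2 * (√y * √N) - 1) * (2 - √y * √N) / √N := by
    nth_rewrite 2 [← sq_sqrt hy]
    field_simp
    ring
  have : 0 ≤ (2 * (√y * √N) - 1) * (2 - √y * √N) / √N :=
    div_nonneg (mul_nonneg (by linarith) (by linarith)) hr.le
  linarith

lemma one_sub_exp_neg_mul_le_min_mul {x t : ℝ} (ht : 1 ≤ t) : 1 - exp (-x * t) ≤ min 1 x * t := by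
  rcases le_total x 1 with h | h
  · rw [min_eq_right h]; linarith [add_one_le_exp (-x * t)]
  · rw [min_eq_left h]; linarith [exp_pos (-x * t)]

lemma one_div_rpow_three_halves_mul_one_sub_exp_le (x : ℝ) {t : ℝ} (ht : 1 ≤ t) :
    1 / t ^ ((3 : ℝ) / 2) * (1 - exp (-x * t)) ≤ min 1 x * (1 / √t) :=
  calc _ ≤ 1 / t ^ ((3 : ℝ) / 2) * (min 1 x * t) :=
        mul_le_mul_of_nonneg_left (one_sub_exp_neg_mul_le_min_mul ht) (by positivity)
    _ = min 1 x * (1 / √t) := by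
        have : 0 < √t := sqrt_pos.2 (by linarith)
        rw [rpow_three_halves (by linarith)]; field_simp

lemma mul_ceil_one_div_le_two {y : ℝ} (hy₀ : 0 < y) (hy₁ : y ≤ 1) : y * ⌈1 / y⌉₊ ≤ 2 := by
  have h := Nat.ceil_lt_add_one (one_div_pos.2 hy₀).le
  calc y * ⌈1 / y⌉₊ ≤ y * (1 / y + 1) := by gcongr
    _ = 1 + y := by field_simp
    _ ≤ 2 := by linarith

/-- There is `c > 0` such that `Σ_{n≥0} (n+1)^{-3/2} (1 − e^{−x(n+1)}) ≤ c √x` for all `x ≥ 0`. -/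
theorem sum_one_sub_exp_le_sqrt :
    ∃ c : ℝ, 0 < c ∧ ∀ x : ℝ, 0 ≤ x →
      (∑' n : ℕ, (1 / ((n : ℝ) + 1) ^ ((3:ℝ) / 2)) * (1 - Real.exp (-x * ((n : ℝ) + 1))))
        ≤ c * Real.sqrt x := by
  refine ⟨5, by norm_num, fun x hx => ?_⟩
  rcases hx.eq_or_lt with rfl | hx₀
  · simp
  set y := min 1 x
  have hy₀ : 0 < y := lt_min one_pos hx₀
  set N := ⌈1 / y⌉₊
  have hN : 0 < N := Nat.ceil_pos.2 (by positivity)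
  have hyN₁ : 1 ≤ y * N := by rw [← div_le_iff₀' hy₀]; exact Nat.le_ceil _
  have hyN₂ : y * N ≤ 2 := mul_ceil_one_div_le_two hy₀ (min_le_left 1 x)
  have hexp_le (n : ℕ) : exp (-x * ((n : ℝ) + 1)) ≤ 1 := exp_le_one_iff.2 (by nlinarith)
  calc _ ≤ 2 * y * √N + 2 / √N :=
        tsum_le_two_mul_sqrt_add_two_div_sqrt
          (fun n => mul_nonneg (by positivity) (sub_nonneg.2 (hexp_le n)))
          (fun n => mul_le_of_le_one_right (by positivity) (by linarith [exp_pos (-x * (n + 1))]))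
          (fun n => one_div_rpow_three_halves_mul_one_sub_exp_le x (by simp)) hN
    _ ≤ 5 * √y := two_mul_mul_sqrt_add_two_div_sqrt_le hy₀.le (by positivity)
        (by linarith) (by linarith)
    _ ≤ 5 * √x := by gcongr; exact min_le_right _ _
end

section
/- One has Σ_{n≥0} e^{−(n+1)} (n+1)^{n−1}/n! = 1. -/
/-!
Let `T(y) = ∑ n^(n-1) yⁿ / n!` be the tree function; the series of the theorem is `T(1/e)`.
For small `x ≥ 0`, expanding each `e^(-m x)` writes `T(x e^(-x))` as an absolutely convergent
double series. Summed along antidiagonals `m + k = N` it collapses to `x`, because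
`∑_m (-1)^(N-m) C(N,m) m^(N-1) = 0` is the `N`-th finite difference of a polynomial of degree
`N - 1`. Since `x e^(-x) < 1/e` on `(0, 1)`, both sides of `T(x e^(-x)) = x` are analytic there,
so the identity holds on all of `(0, 1)`. Letting `x → 1⁻`, the nonnegative series gives
`T(1/e) ≤ 1` through its partial sums and `T(1/e) ≥ x` for every `x < 1`.
-/

open Finset Filter Real Set Topology
open scoped Nat ENNReal

theorem HasSum.sum_antidiagonal {α : Type*} [AddCommMonoid α] [TopologicalSpace α]
    [ContinuousAdd α] [RegularSpace α] {f : ℕ × ℕ → α} {a : α} (hf : HasSum f a) :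
    HasSum (fun n ↦ ∑ p ∈ antidiagonal n, f p) a :=
  (HasAntidiagonal.sigmaAntidiagonalEquivProd.hasSum_iff.mpr hf).sigma fun n ↦
    (antidiagonal n).hasSum f

theorem sum_range_alternating_choose_mul_pow_eq_zero {R : Type*} [CommRing R] {j n : ℕ}
    (h : j < n) : ∑ k ∈ range (n + 1), (-1 : R) ^ (n - k) * n.choose k * (k : R) ^ j = 0 := by
  simpa using (fwdDiff_iter_eq_sum_shift (h := (1 : R)) (fun r : R ↦ r ^ j) n 0).symm.trans
    (congrFun (fwdDiff_iter_pow_eq_zero_of_lt h) 0)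

theorem Real.hasSum_pow_div_factorial (x : ℝ) : HasSum (fun n ↦ x ^ n / n !) (exp x) := by
  rw [exp_eq_exp_ℝ]
  exact NormedSpace.expSeries_div_hasSum_exp x

theorem Real.mul_exp_neg_lt_exp_neg_one {t : ℝ} (ht : t ≠ 1) : t * exp (-t) < exp (-1) := by
  have : t < exp (t - 1) := by linarith [add_one_lt_exp (sub_ne_zero.mpr ht)]
  calc t * exp (-t) < exp (t - 1) * exp (-t) := by gcongr
    _ = exp (-1) := by rw [← exp_add]; ring_nf

/-- `n ^ (n - 1) / n !`, with the `n = 0` term set to `0` (truncated subtraction would give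
`0 ^ 0 = 1`). -/
noncomputable def treeCoeff : ℕ → ℝ
  | 0 => 0
  | n + 1 => ((n + 1 : ℕ) : ℝ) ^ n / (n + 1)!

noncomputable def treeFun (y : ℝ) : ℝ := ∑' n, treeCoeff n * y ^ n

theorem treeCoeff_nonneg (n : ℕ) : 0 ≤ treeCoeff n := by
  cases n <;> simp only [treeCoeff] <;> positivity

theorem treeCoeff_le_exp_one_pow (n : ℕ) : treeCoeff n ≤ exp 1 ^ n := by
  cases n with
  | zero => simp [treeCoeff]
  | succ n =>
    rw [← exp_nat_mul, mul_one]
    calc treeCoeff (n + 1) ≤ ((n + 1 : ℕ) : ℝ) ^ (n + 1) / (n + 1)! := by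
          simp only [treeCoeff]
          gcongr
          · exact_mod_cast Nat.le_add_left 1 n
          · exact n.le_succ
      _ ≤ exp (n + 1 : ℕ) := Real.pow_div_factorial_le_exp _ (by positivity) _

theorem summable_treeCoeff_mul_pow {y : ℝ} (hy₀ : 0 ≤ y) (hy : y < exp (-1)) :
    Summable fun n ↦ treeCoeff n * y ^ n := by
  have hey : exp 1 * y < 1 := by
    simpa [← exp_add] using mul_lt_mul_of_pos_left hy (exp_pos 1)
  refine (summable_geometric_of_lt_one (by positivity) hey).of_nonneg_of_le
    (fun n ↦ mul_nonneg (treeCoeff_nonneg n) (pow_nonneg hy₀ n)) fun n ↦ ?_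
  rw [mul_pow]
  exact mul_le_mul_of_nonneg_right (treeCoeff_le_exp_one_pow n) (pow_nonneg hy₀ n)

theorem analyticAt_treeFun {y : ℝ} (hy : |y| < exp (-1)) : AnalyticAt ℝ treeFun y := by
  set p := FormalMultilinearSeries.ofScalars ℝ treeCoeff
  have hradius : ((exp (-1)).toNNReal : ℝ≥0∞) ≤ p.radius := by
    refine p.le_radius_of_bound 1 fun n ↦ ?_
    rw [FormalMultilinearSeries.ofScalars_norm, norm_of_nonneg (treeCoeff_nonneg n),
      Real.coe_toNNReal _ (exp_pos _).le]
    calc treeCoeff n * exp (-1) ^ n ≤ exp 1 ^ n * exp (-1) ^ n := by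
          gcongr; exact treeCoeff_le_exp_one_pow n
      _ = 1 := by rw [← mul_pow, ← exp_add]; simp
  have hy' : y ∈ Metric.eball (0 : ℝ) p.radius := by
    refine lt_of_lt_of_le ?_ hradius
    rw [edist_zero_right, Real.enorm_eq_ofReal_abs]
    exact (ENNReal.ofReal_lt_ofReal_iff (exp_pos _)).mpr hy
  have hsum : p.sum = treeFun := funext fun y ↦ tsum_congr fun n ↦ by
    rw [FormalMultilinearSeries.ofScalars_apply_eq, smul_eq_mul]
  rw [← hsum]
  exact (p.hasFPowerSeriesOnBall (bot_le.trans_lt hy')).analyticAt_of_mem hy'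

theorem treeCoeff_mul_neg_pow_div_factorial {m k : ℕ} (h : 2 ≤ m + k) :
    treeCoeff m * (-(m : ℝ)) ^ k / k ! =
      (-1) ^ k * (m + k).choose m * (m : ℝ) ^ (m + k - 1) / (m + k)! := by
  cases m with
  | zero => simp [treeCoeff, zero_pow (show k - 1 ≠ 0 by omega)]
  | succ m =>
    rw [Nat.cast_add_choose, show m + 1 + k - 1 = m + k by omega, pow_add, neg_pow]
    simp only [treeCoeff]
    field_simp

theorem sum_antidiagonal_treeCoeff_mul_neg_pow_div_factorial (n : ℕ) :
    ∑ p ∈ antidiagonal n, treeCoeff p.1 * (-(p.1 : ℝ)) ^ p.2 / p.2 ! = if n = 1 then 1 else 0 := by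
  match n with
  | 0 => simp [treeCoeff]
  | 1 => simp [treeCoeff, Nat.antidiagonal_succ]
  | n + 2 =>
    rw [Nat.sum_antidiagonal_eq_sum_range_succ_mk, if_neg (by omega)]
    calc ∑ m ∈ range (n + 3), treeCoeff m * (-(m : ℝ)) ^ (n + 2 - m) / (n + 2 - m)!
        = ∑ m ∈ range (n + 3),
            (-1) ^ (n + 2 - m) * (n + 2).choose m * (m : ℝ) ^ (n + 1) / (n + 2)! :=
          sum_congr rfl fun m hm ↦ by
            have := treeCoeff_mul_neg_pow_div_factorial (m := m) (k := n + 2 - m) (by omega)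
            rwa [Nat.add_sub_cancel' (by have := mem_range.mp hm; omega)] at this
      _ = 0 := by
          rw [← sum_div, sum_range_alternating_choose_mul_pow_eq_zero (by omega), zero_div]

theorem treeFun_mul_exp_neg_of_mul_exp_lt {x : ℝ} (hx₀ : 0 ≤ x) (hx : x * exp x < exp (-1)) :
    treeFun (x * exp (-x)) = x := by
  set f : ℕ × ℕ → ℝ := fun p ↦ treeCoeff p.1 * (-(p.1 : ℝ)) ^ p.2 / p.2 ! * x ^ (p.1 + p.2)
  set g : ℕ × ℕ → ℝ := fun p ↦ treeCoeff p.1 * (p.1 : ℝ) ^ p.2 / p.2 ! * x ^ (p.1 + p.2)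
  have hrow (m : ℕ) : HasSum (fun k ↦ f (m, k)) (treeCoeff m * (x * exp (-x)) ^ m) := by
    rw [show (fun k ↦ f (m, k)) = fun k ↦ treeCoeff m * x ^ m * ((-(m : ℝ) * x) ^ k / k !) by
      funext k; simp only [f]; ring, mul_pow, ← exp_nat_mul, ← mul_assoc, mul_neg, ← neg_mul]
    exact (hasSum_pow_div_factorial _).mul_left _
  have hrow_abs (m : ℕ) : HasSum (fun k ↦ g (m, k)) (treeCoeff m * (x * exp x) ^ m) := by
    rw [show (fun k ↦ g (m, k)) = fun k ↦ treeCoeff m * x ^ m * (((m : ℝ) * x) ^ k / k !) by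
      funext k; simp only [g]; ring, mul_pow, ← exp_nat_mul, ← mul_assoc]
    exact (hasSum_pow_div_factorial _).mul_left _
  have hf : Summable f := by
    refine Summable.of_norm_bounded (g := g) ?_ fun p ↦ ?_
    · refine (summable_prod_of_nonneg fun p ↦ ?_).mpr ⟨fun m ↦ (hrow_abs m).summable, ?_⟩
      · have := treeCoeff_nonneg p.1
        positivity
      · simpa only [(hrow_abs _).tsum_eq] using summable_treeCoeff_mul_pow (by positivity) hx
    · simp [f, g, abs_of_nonneg (treeCoeff_nonneg _), abs_of_nonneg hx₀]
  have hdiag : HasSum (fun n ↦ ∑ p ∈ antidiagonal n, f p) x := by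
    convert hasSum_ite_eq 1 x using 2 with n
    have hf_diag : ∑ p ∈ antidiagonal n, f p =
        (∑ p ∈ antidiagonal n, treeCoeff p.1 * (-(p.1 : ℝ)) ^ p.2 / p.2 !) * x ^ n := by
      rw [sum_mul]
      exact sum_congr rfl fun p hp ↦ by simp only [f, mem_antidiagonal.mp hp]
    rw [hf_diag, sum_antidiagonal_treeCoeff_mul_neg_pow_div_factorial]
    split_ifs with hn <;> simp [hn]
  exact ((hdiag.unique hf.hasSum.sum_antidiagonal ▸ hf.hasSum).prod_fiberwise hrow).tsum_eq

theorem treeFun_mul_exp_neg {t : ℝ} (ht : t ∈ Ioo (0 : ℝ) 1) : treeFun (t * exp (-t)) = t := by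
  have hanalytic : AnalyticOnNhd ℝ (fun t ↦ treeFun (t * exp (-t))) (Ioo 0 1) := fun t ht ↦ by
    refine (analyticAt_treeFun ?_).comp
      (analyticAt_id.mul (analyticAt_rexp.comp analyticAt_id.neg))
    rw [abs_of_pos (by have := ht.1; positivity)]
    exact mul_exp_neg_lt_exp_neg_one ht.2.ne
  have hsmall : (fun t ↦ treeFun (t * exp (-t))) =ᶠ[𝓝 (1 / 16)] id := by
    filter_upwards [Ioo_mem_nhds (show (0 : ℝ) < 1 / 16 by norm_num)
      (show (1 / 16 : ℝ) < 1 / 8 by norm_num)] with s hs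
    refine treeFun_mul_exp_neg_of_mul_exp_lt hs.1.le ?_
    calc s * exp s ≤ 1 / 8 * exp 1 := by
          gcongr
          · exact hs.2.le
          · linarith [hs.2]
      _ < exp (-1) := by
          have hinv : exp (-1) * exp 1 = 1 := by rw [← exp_add]; simp
          nlinarith [exp_one_lt_d9, exp_pos 1]
  exact hanalytic.eqOn_of_preconnected_of_eventuallyEq analyticOnNhd_id isPreconnected_Ioo
    (by norm_num) hsmall ht

theorem sum_range_treeCoeff_mul_exp_neg_one_pow_le_one (N : ℕ) :
    ∑ n ∈ range N, treeCoeff n * exp (-1) ^ n ≤ 1 := by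
  have hcont : Tendsto (fun t ↦ ∑ n ∈ range N, treeCoeff n * (t * exp (-t)) ^ n) (𝓝[<] 1)
      (𝓝 (∑ n ∈ range N, treeCoeff n * exp (-1) ^ n)) := by
    have : Continuous fun t ↦ ∑ n ∈ range N, treeCoeff n * (t * exp (-t)) ^ n := by fun_prop
    simpa using (this.tendsto 1).mono_left nhdsWithin_le_nhds
  refine le_of_tendsto hcont ?_
  filter_upwards [Ioo_mem_nhdsLT one_pos] with t ht
  have hy₀ : 0 ≤ t * exp (-t) := by have := ht.1; positivity
  calc ∑ n ∈ range N, treeCoeff n * (t * exp (-t)) ^ n ≤ treeFun (t * exp (-t)) :=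
        (summable_treeCoeff_mul_pow hy₀ (mul_exp_neg_lt_exp_neg_one ht.2.ne)).sum_le_tsum _
          fun n _ ↦ mul_nonneg (treeCoeff_nonneg n) (pow_nonneg hy₀ n)
    _ = t := treeFun_mul_exp_neg ht
    _ ≤ 1 := ht.2.le

theorem hasSum_treeCoeff_mul_exp_neg_one_pow : HasSum (fun n ↦ treeCoeff n * exp (-1) ^ n) 1 := by
  have hnonneg (n : ℕ) : 0 ≤ treeCoeff n * exp (-1) ^ n := by
    have := treeCoeff_nonneg n
    positivity
  have hsum := summable_of_sum_range_le hnonneg sum_range_treeCoeff_mul_exp_neg_one_pow_le_one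
  have hge : 1 ≤ ∑' n, treeCoeff n * exp (-1) ^ n := by
    refine le_of_tendsto (tendsto_id.mono_left nhdsWithin_le_nhds :
      Tendsto id (𝓝[<] (1 : ℝ)) (𝓝 1)) ?_
    filter_upwards [Ioo_mem_nhdsLT one_pos] with t ht
    have hy₀ : 0 ≤ t * exp (-t) := by have := ht.1; positivity
    have hy := mul_exp_neg_lt_exp_neg_one ht.2.ne
    calc id t = treeFun (t * exp (-t)) := (treeFun_mul_exp_neg ht).symm
      _ ≤ ∑' n, treeCoeff n * exp (-1) ^ n :=
        (summable_treeCoeff_mul_pow hy₀ hy).tsum_le_tsum (fun n ↦ by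
          have := treeCoeff_nonneg n
          gcongr) hsum
  have hle := tsum_le_of_sum_range_le hnonneg sum_range_treeCoeff_mul_exp_neg_one_pow_le_one
  exact hsum.hasSum_iff.mpr (le_antisymm hle hge)

/-- The Borel distribution with parameter 1 sums to one:
`Σ_{n≥0} e^{−(n+1)} (n+1)^{n−1}/n! = 1`. -/
theorem borel_distribution_sums_to_one :
    (∑' n : ℕ, Real.exp (-((n : ℝ) + 1)) * ((n : ℝ) + 1) ^ ((n : ℝ) - 1) / (n.factorial : ℝ))
      = 1 := by
  have hterm (n : ℕ) : exp (-((n : ℝ) + 1)) * ((n : ℝ) + 1) ^ ((n : ℝ) - 1) / (n.factorial : ℝ) =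
      treeCoeff (n + 1) * exp (-1) ^ (n + 1) := by
    rw [rpow_sub (by positivity), rpow_natCast, rpow_one, ← exp_nat_mul, treeCoeff,
      Nat.factorial_succ]
    push_cast
    field_simp
  have h := (hasSum_nat_add_iff' 1).mpr hasSum_treeCoeff_mul_exp_neg_one_pow
  rw [sum_range_one, treeCoeff.eq_1, zero_mul, sub_zero] at h
  rw [tsum_congr hterm, h.tsum_eq]
end

section
/- Let α ∈ (1/2,1), λ > 0, ν > 0, a ∈ ℝ and t₀ > 0. Then there is at most one continuous function g : [0,t₀] → ℝ satisfying the Volterra equation g(t) = ∫_0^t (1/λ) f^{α,λ}(t−s) (a + (ν²/2) g(s)²) ds for all t ∈ [0,t₀]. -/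
open MeasureTheory Set

/-- Mittag-Leffler function `E_{α,β}(z) = Σ_{n≥0} z^n / Γ(αn+β)`. -/
noncomputable def mlE (α β z : ℝ) : ℝ := ∑' n : ℕ, z ^ n / Real.Gamma (α * n + β)

/-- Mittag-Leffler density `f^{α,λ}(t) = λ t^{α−1} E_{α,α}(−λ t^α)`. -/
noncomputable def mlf (α lam t : ℝ) : ℝ := lam * t ^ (α - 1) * mlE α α (-lam * t ^ α)

/-!
The kernel `(1/λ) f^{α,λ}(u) = u^{α-1} E_{α,α}(-λ u^α)` is bounded by a multiple of `u^{α-1}` on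
`(0, t₀]`, and `x ↦ a + ν²x²/2` is Lipschitz on the (bounded) ranges of two continuous solutions.
Hence `φ = |g₁ - g₂|` satisfies `φ t ≤ C ∫₀ᵗ (t - s)^{α-1} φ s ds`. Multiplying by `e^{-γt}` and
using `∫₀^∞ u^{α-1} e^{-γu} du = Γ(α) γ^{-α}`, the maximum of `e^{-γt} φ t` is at most half of
itself once `γ` is large, so `φ = 0`.
-/

open Filter Real

section MittagLeffler

variable {α β : ℝ}

-- Log-convexity of `Γ` on `[x + α, x + α + 1]`, an interval containing `x + 1`.
lemma mul_Gamma_le_Gamma_add_mul_rpow (hα₀ : 0 < α) (hα₁ : α < 1) {x : ℝ} (hx : 0 < x) :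
    x * Gamma x ≤ Gamma (x + α) * (x + α) ^ (1 - α) := by
  have hΓ : 0 < Gamma (x + α) := Gamma_pos_of_pos (by positivity)
  have hconv := Gamma_mul_add_mul_le_rpow_Gamma_mul_rpow_Gamma (s := x + α) (t := x + α + 1)
    (by positivity) (by positivity) hα₀ (sub_pos.2 hα₁) (add_sub_cancel α 1)
  rw [Gamma_add_one (by positivity), mul_rpow (by positivity) hΓ.le, mul_left_comm,
    ← rpow_add hΓ, add_sub_cancel, rpow_one] at hconv
  rw [← Gamma_add_one hx.ne', mul_comm (Gamma _)]
  convert hconv using 2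
  ring

lemma mul_Gamma_le_Gamma_add_div_two (hα₀ : 0 < α) (hα₁ : α < 1) {x c : ℝ} (hx : α ≤ x)
    (hc : 4 * c ≤ (x + α) ^ α) (hc0 : 0 ≤ c) : c * Gamma x ≤ Gamma (x + α) / 2 := by
  have hx₀ : 0 < x := hα₀.trans_le hx
  have hpow : 0 < (x + α) ^ α := by positivity
  have hsmall : c * (x + α) ^ (1 - α) ≤ x / 2 := by
    rw [rpow_sub (by positivity), rpow_one, mul_div_assoc', div_le_iff₀ hpow]
    nlinarith
  have hΓ : 0 < Gamma (x + α) := Gamma_pos_of_pos (by positivity)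
  have hlogconv := mul_le_mul_of_nonneg_left (mul_Gamma_le_Gamma_add_mul_rpow hα₀ hα₁ hx₀) hc0
  refine le_of_mul_le_mul_left ?_ hx₀
  nlinarith [mul_le_mul_of_nonneg_left hsmall hΓ.le]

lemma summable_pow_div_Gamma (hα₀ : 0 < α) (hα₁ : α < 1) (hβ : 0 < β) (z : ℝ) :
    Summable fun n : ℕ => z ^ n / Gamma (α * n + β) := by
  refine summable_of_ratio_norm_eventually_le (r := 1 / 2) (by norm_num) ?_
  have hlin : Tendsto (fun n : ℕ => α * n + β) atTop atTop :=
    tendsto_atTop_add_const_right _ _ (tendsto_natCast_atTop_atTop.const_mul_atTop hα₀)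
  filter_upwards [hlin.eventually_ge_atTop α, ((tendsto_rpow_atTop hα₀).comp
    (tendsto_atTop_add_const_right _ α hlin)).eventually_ge_atTop (4 * |z|)] with n hn hgrow
  have hΓ : 0 < Gamma (α * n + β) := Gamma_pos_of_pos (by positivity)
  have hΓ' : 0 < Gamma (α * n + β + α) := Gamma_pos_of_pos (by positivity)
  have key := mul_Gamma_le_Gamma_add_div_two hα₀ hα₁ hn hgrow (abs_nonneg z)
  rw [norm_div, norm_div, norm_pow, norm_pow, Real.norm_of_nonneg hΓ.le, Nat.cast_succ,
    mul_add_one, add_right_comm, Real.norm_of_nonneg hΓ'.le, pow_succ, div_le_iff₀ hΓ']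
  calc ‖z‖ ^ n * ‖z‖ ≤ ‖z‖ ^ n * (Gamma (α * n + β + α) / 2 / Gamma (α * n + β)) :=
        mul_le_mul_of_nonneg_left ((le_div_iff₀ hΓ).2 key) (by positivity)
    _ = _ := by ring

lemma abs_mlE_le (hα₀ : 0 < α) (hα₁ : α < 1) (hβ : 0 < β) {z R : ℝ} (hz : |z| ≤ R) :
    |mlE α β z| ≤ mlE α β R := by
  rw [← Real.norm_eq_abs]
  refine tsum_of_norm_bounded (summable_pow_div_Gamma hα₀ hα₁ hβ R).hasSum fun n => ?_
  have hΓ : 0 < Gamma (α * n + β) := Gamma_pos_of_pos (by positivity)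
  rw [norm_div, norm_pow, Real.norm_of_nonneg hΓ.le, Real.norm_eq_abs]
  gcongr

lemma continuous_mlE (hα₀ : 0 < α) (hα₁ : α < 1) (hβ : 0 < β) : Continuous (mlE α β) := by
  refine continuous_iff_continuousAt.2 fun z => ?_
  have hcont : ContinuousOn (mlE α β) (Icc (-(|z| + 1)) (|z| + 1)) := by
    refine continuousOn_tsum (fun n => (continuous_pow n).continuousOn.div_const _)
      (summable_pow_div_Gamma hα₀ hα₁ hβ (|z| + 1)) fun n w hw => ?_
    have hΓ : 0 < Gamma (α * n + β) := Gamma_pos_of_pos (by positivity)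
    rw [norm_div, norm_pow, Real.norm_of_nonneg hΓ.le, Real.norm_eq_abs]
    gcongr
    exact abs_le.2 hw
  exact hcont.continuousAt (Icc_mem_nhds (by linarith [neg_abs_le z]) (by linarith [le_abs_self z]))

lemma continuousOn_mlf (hα₀ : 0 < α) (hα₁ : α < 1) (lam : ℝ) : ContinuousOn (mlf α lam) (Ioi 0) :=
  fun u hu => by
    have hu : u ≠ 0 := (mem_Ioi.1 hu).ne'
    exact ((continuousAt_const.mul (continuousAt_rpow_const _ _ (Or.inl hu))).mul
      ((continuous_mlE hα₀ hα₁ hα₀).continuousAt.comp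
        (continuousAt_const.mul (continuousAt_rpow_const _ _ (Or.inl hu))))).continuousWithinAt

lemma abs_one_div_mul_mlf_le (hα₀ : 0 < α) (hα₁ : α < 1) (lam : ℝ) {u T : ℝ} (hu : u ∈ Ioc 0 T) :
    |1 / lam * mlf α lam u| ≤ mlE α α (|lam| * T ^ α) * u ^ (α - 1) := by
  have hupow : 0 < u ^ (α - 1) := rpow_pos_of_pos hu.1 _
  have harg : |-lam * u ^ α| ≤ |lam| * T ^ α := by
    rw [abs_mul, abs_neg, abs_of_pos (rpow_pos_of_pos hu.1 _)]
    exact mul_le_mul_of_nonneg_left (rpow_le_rpow hu.1.le hu.2 hα₀.le) (abs_nonneg lam)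
  calc |1 / lam * mlf α lam u|
      = |1 / lam * lam| * (u ^ (α - 1) * |mlE α α (-lam * u ^ α)|) := by
        rw [mlf, abs_mul, abs_mul, abs_mul, abs_mul, abs_of_pos hupow]; ring
    _ ≤ 1 * (u ^ (α - 1) * mlE α α (|lam| * T ^ α)) := by
        gcongr
        · rw [one_div, abs_mul, abs_inv]; exact inv_mul_le_one_of_le₀ le_rfl (abs_nonneg _)
        · exact abs_mlE_le hα₀ hα₁ hα₀ harg
    _ = mlE α α (|lam| * T ^ α) * u ^ (α - 1) := by ring

end MittagLeffler

section WeaklySingularKernel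

variable {k : ℝ → ℝ} {K α T t : ℝ}

lemma intervalIntegrable_comp_sub_mul (hα : 0 < α) (hk : ContinuousOn k (Ioc 0 T))
    (hkb : ∀ u ∈ Ioc 0 T, |k u| ≤ K * u ^ (α - 1)) {F : ℝ → ℝ} (hF : ContinuousOn F (Icc 0 T))
    (ht : t ∈ Icc 0 T) : IntervalIntegrable (fun s => k (t - s) * F s) volume 0 t := by
  obtain ⟨BF, hBF⟩ := isCompact_Icc.exists_bound_of_continuousOn hF
  have hsub : Ioo 0 t ⊆ Icc 0 T := fun s hs => ⟨hs.1.le, hs.2.le.trans ht.2⟩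
  have hmaps : MapsTo (t - ·) (Ioo 0 t) (Ioc 0 T) := fun s hs =>
    ⟨sub_pos.2 hs.2, by linarith [hs.1, ht.2]⟩
  have hsing : IntervalIntegrable (fun s => (t - s) ^ (α - 1)) volume 0 t := by
    simpa using
      (intervalIntegral.intervalIntegrable_rpow' (by linarith) (a := t) (b := 0)).comp_sub_left t
  rw [intervalIntegrable_iff_integrableOn_Ioo_of_le ht.1] at hsing ⊢
  have hcont : ContinuousOn (fun s => k (t - s) * F s) (Ioo 0 t) :=
    (hk.comp (continuousOn_const.sub continuousOn_id) hmaps).mul (hF.mono hsub)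
  refine (hsing.const_mul (K * BF)).mono' (hcont.aestronglyMeasurable measurableSet_Ioo)
    (ae_restrict_of_forall_mem measurableSet_Ioo fun s hs => ?_)
  have hkts := hkb _ (hmaps hs)
  rw [norm_mul, Real.norm_eq_abs, mul_right_comm]
  exact mul_le_mul hkts (hBF s (hsub hs)) (norm_nonneg _) ((abs_nonneg _).trans hkts)

lemma intervalIntegrable_sub_rpow_mul (hα : 0 < α) {F : ℝ → ℝ} (hF : ContinuousOn F (Icc 0 T))
    (ht : t ∈ Icc 0 T) : IntervalIntegrable (fun s => (t - s) ^ (α - 1) * F s) volume 0 t :=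
  intervalIntegrable_comp_sub_mul hα
    (fun u hu => (continuousAt_rpow_const _ _ (Or.inl hu.1.ne')).continuousWithinAt)
    (fun u hu => by rw [one_mul, abs_of_pos (rpow_pos_of_pos hu.1 _)]) hF ht

lemma abs_integral_comp_sub_mul_sub_le (hα : 0 < α) (hk : ContinuousOn k (Ioc 0 T))
    (hkb : ∀ u ∈ Ioc 0 T, |k u| ≤ K * u ^ (α - 1)) {F₁ F₂ φ : ℝ → ℝ} {L : ℝ}
    (hF₁ : ContinuousOn F₁ (Icc 0 T)) (hF₂ : ContinuousOn F₂ (Icc 0 T))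
    (hφ : ContinuousOn φ (Icc 0 T)) (hL : ∀ s ∈ Icc 0 T, |F₁ s - F₂ s| ≤ L * φ s)
    (ht : t ∈ Icc 0 T) :
    |(∫ s in 0..t, k (t - s) * F₁ s) - ∫ s in 0..t, k (t - s) * F₂ s| ≤
      K * L * ∫ s in 0..t, (t - s) ^ (α - 1) * φ s := by
  rw [← intervalIntegral.integral_sub (intervalIntegrable_comp_sub_mul hα hk hkb hF₁ ht)
    (intervalIntegrable_comp_sub_mul hα hk hkb hF₂ ht), ← intervalIntegral.integral_const_mul,
    ← Real.norm_eq_abs]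
  refine intervalIntegral.norm_integral_le_of_norm_le ht.1 ?_
    ((intervalIntegrable_sub_rpow_mul hα hφ ht).const_mul _)
  -- `hkb` says nothing at `u = 0`, i.e. at `s = t`, a null set.
  filter_upwards [compl_mem_ae_iff.2 (measure_singleton t)] with s hst hs
  have hkts := hkb (t - s) ⟨sub_pos.2 (lt_of_le_of_ne hs.2 hst), by linarith [hs.1, ht.2]⟩
  have hLs := hL s ⟨hs.1.le, hs.2.trans ht.2⟩
  calc ‖k (t - s) * F₁ s - k (t - s) * F₂ s‖ = |k (t - s)| * |F₁ s - F₂ s| := by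
        rw [← mul_sub, Real.norm_eq_abs, abs_mul]
    _ ≤ K * (t - s) ^ (α - 1) * (L * φ s) :=
        mul_le_mul hkts hLs (abs_nonneg _) ((abs_nonneg _).trans hkts)
    _ = K * L * ((t - s) ^ (α - 1) * φ s) := by ring

lemma integral_rpow_mul_exp_neg_mul_le (hα : 0 < α) {γ : ℝ} (hγ : 0 < γ) (ht : 0 ≤ t) :
    ∫ u in 0..t, u ^ (α - 1) * exp (-(γ * u)) ≤ (1 / γ) ^ α * Gamma α := by
  have hint : IntegrableOn (fun u => u ^ (α - 1) * exp (-(γ * u))) (Ioi 0) :=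
    (integrableOn_rpow_mul_exp_neg_mul_rpow (s := α - 1) (by linarith) one_pos hγ).congr_fun
      (fun u _ => by simp only [rpow_one, neg_mul]) measurableSet_Ioi
  rw [intervalIntegral.integral_of_le ht, ← integral_rpow_mul_exp_neg_mul_Ioi hα hγ]
  exact setIntegral_mono_set hint
    (ae_restrict_of_forall_mem measurableSet_Ioi fun u hu => by
      have := rpow_pos_of_pos (mem_Ioi.1 hu) (α - 1); positivity)
    Ioc_subset_Ioi_self.eventuallyLE

lemma integral_sub_rpow_mul_le_of_le_exp (hα : 0 < α) {γ M : ℝ} (hγ : 0 < γ) (hM : 0 ≤ M)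
    {φ : ℝ → ℝ} (hφc : ContinuousOn φ (Icc 0 t)) (hφ : ∀ s ∈ Icc 0 t, φ s ≤ M * exp (γ * s))
    (ht : 0 ≤ t) :
    ∫ s in 0..t, (t - s) ^ (α - 1) * φ s ≤ M * exp (γ * t) * ((1 / γ) ^ α * Gamma α) := by
  have htt : t ∈ Icc 0 t := ⟨ht, le_rfl⟩
  calc ∫ s in 0..t, (t - s) ^ (α - 1) * φ s
      ≤ ∫ s in 0..t, (t - s) ^ (α - 1) * (M * exp (γ * s)) :=
        intervalIntegral.integral_mono_on ht (intervalIntegrable_sub_rpow_mul hα hφc htt)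
          (intervalIntegrable_sub_rpow_mul hα (by fun_prop) htt) fun s hs =>
            mul_le_mul_of_nonneg_left (hφ s hs) (rpow_nonneg (sub_nonneg.2 hs.2) _)
    _ = M * exp (γ * t) * ∫ u in 0..t, u ^ (α - 1) * exp (-(γ * u)) := by
        have hsub := intervalIntegral.integral_comp_sub_left
          (fun u => u ^ (α - 1) * exp (-(γ * u))) t (a := 0) (b := t)
        rw [sub_self, sub_zero] at hsub
        rw [← hsub, ← intervalIntegral.integral_const_mul]
        refine intervalIntegral.integral_congr fun s _ => ?_
        rw [show γ * s = γ * t + -(γ * (t - s)) by ring, exp_add]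
        ring
    _ ≤ M * exp (γ * t) * ((1 / γ) ^ α * Gamma α) := by
        gcongr
        exact integral_rpow_mul_exp_neg_mul_le hα hγ ht

lemma eqOn_zero_of_le_mul_integral_sub_rpow (hα : 0 < α) {C : ℝ} (hC : 0 ≤ C) {φ : ℝ → ℝ}
    (hφc : ContinuousOn φ (Icc 0 T)) (hφ₀ : ∀ t ∈ Icc 0 T, 0 ≤ φ t)
    (hφ : ∀ t ∈ Icc 0 T, φ t ≤ C * ∫ s in 0..t, (t - s) ^ (α - 1) * φ s) :
    EqOn φ 0 (Icc 0 T) := by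
  intro t ht
  obtain ⟨γ, hγ, hγC⟩ : ∃ γ > 0, C * ((1 / γ) ^ α * Gamma α) ≤ 1 / 2 := by
    have hΓ := Gamma_pos_of_pos hα
    refine ⟨(2 * C * Gamma α + 1) ^ α⁻¹, by positivity, ?_⟩
    rw [one_div, inv_rpow (by positivity), rpow_inv_rpow (by positivity) hα.ne']
    rw [inv_mul_eq_div, mul_div_assoc', div_le_iff₀ (by positivity)]
    nlinarith
  set ψ : ℝ → ℝ := fun s => exp (-(γ * s)) * φ s with hψ
  obtain ⟨m, hm, hmax⟩ := isCompact_Icc.exists_isMaxOn (f := ψ) ⟨t, ht⟩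
    ((continuous_exp.comp (continuous_const.mul continuous_id).neg).continuousOn.mul hφc)
  have hψm : 0 ≤ ψ m := mul_nonneg (exp_pos _).le (hφ₀ m hm)
  have hhalf : ∀ u ∈ Icc 0 T, ψ u ≤ ψ m / 2 := by
    intro u hu
    have hsub : Icc 0 u ⊆ Icc 0 T := Icc_subset_Icc_right hu.2
    have hbound : ∀ s ∈ Icc 0 u, φ s ≤ ψ m * exp (γ * s) := fun s hs => by
      calc φ s = ψ s * exp (γ * s) := by
            rw [hψ, mul_right_comm, ← exp_add, neg_add_cancel, exp_zero, one_mul]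
        _ ≤ ψ m * exp (γ * s) := mul_le_mul_of_nonneg_right (hmax (hsub hs)) (exp_pos _).le
    have hint := integral_sub_rpow_mul_le_of_le_exp hα hγ hψm (hφc.mono hsub) hbound hu.1
    calc ψ u ≤ exp (-(γ * u)) * (C * (ψ m * exp (γ * u) * ((1 / γ) ^ α * Gamma α))) :=
          mul_le_mul_of_nonneg_left ((hφ u hu).trans (mul_le_mul_of_nonneg_left hint hC))
            (exp_pos _).le
      _ = exp (-(γ * u)) * exp (γ * u) * (ψ m * (C * ((1 / γ) ^ α * Gamma α))) := by ring
      _ = ψ m * (C * ((1 / γ) ^ α * Gamma α)) := by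
          rw [← exp_add, neg_add_cancel, exp_zero, one_mul]
      _ ≤ ψ m / 2 := by nlinarith
  have hψt : ψ t ≤ 0 := (hmax ht).trans (by linarith [hhalf m hm])
  exact le_antisymm (nonpos_of_mul_nonpos_right hψt (exp_pos _)) (hφ₀ t ht)

end WeaklySingularKernel

lemma abs_sq_sub_sq_le {x y B : ℝ} (hx : |x| ≤ B) (hy : |y| ≤ B) :
    |x ^ 2 - y ^ 2| ≤ 2 * B * |x - y| := by
  rw [sq_sub_sq, abs_mul]
  exact mul_le_mul_of_nonneg_right ((abs_add_le x y).trans (by linarith)) (abs_nonneg _)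

theorem volterra_riccati_unique_general (α lam ν a t₀ : ℝ) (hα : α ∈ Ioo (1/2 : ℝ) 1)
    (ht₀ : 0 < t₀)
    (g₁ g₂ : ℝ → ℝ) (h₁c : ContinuousOn g₁ (Icc 0 t₀)) (h₂c : ContinuousOn g₂ (Icc 0 t₀))
    (h₁ : ∀ t ∈ Icc (0:ℝ) t₀,
      g₁ t = ∫ s in (0:ℝ)..t, (1 / lam) * mlf α lam (t - s) * (a + ν ^ 2 / 2 * g₁ s ^ 2))
    (h₂ : ∀ t ∈ Icc (0:ℝ) t₀,
      g₂ t = ∫ s in (0:ℝ)..t, (1 / lam) * mlf α lam (t - s) * (a + ν ^ 2 / 2 * g₂ s ^ 2)) :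
    EqOn g₁ g₂ (Icc 0 t₀) := by
  have hα₀ : 0 < α := by linarith [hα.1]
  set K := mlE α α (|lam| * t₀ ^ α)
  have hK : 0 ≤ K :=
    (abs_nonneg _).trans (abs_mlE_le hα₀ hα.2 hα₀ (abs_of_nonneg (by positivity)).le)
  obtain ⟨B, hB₀, hB⟩ := (isCompact_Icc.image_of_continuousOn
    (h₁c.prodMk h₂c)).isBounded.exists_pos_norm_le
  have hB₁ : ∀ s ∈ Icc 0 t₀, |g₁ s| ≤ B := fun s hs => (norm_fst_le _).trans (hB _ ⟨s, hs, rfl⟩)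
  have hB₂ : ∀ s ∈ Icc 0 t₀, |g₂ s| ≤ B := fun s hs => (norm_snd_le _).trans (hB _ ⟨s, hs, rfl⟩)
  have hLip : ∀ s ∈ Icc 0 t₀, |(a + ν ^ 2 / 2 * g₁ s ^ 2) - (a + ν ^ 2 / 2 * g₂ s ^ 2)| ≤
      ν ^ 2 * B * |g₁ s - g₂ s| := fun s hs => by
    rw [add_sub_add_left_eq_sub, ← mul_sub, abs_mul, abs_of_nonneg (by positivity)]
    nlinarith [abs_sq_sub_sq_le (hB₁ s hs) (hB₂ s hs)]
  have hdiff := eqOn_zero_of_le_mul_integral_sub_rpow (φ := fun s => |g₁ s - g₂ s|) hα₀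
    (by positivity : 0 ≤ K * (ν ^ 2 * B))
    (h₁c.sub h₂c).abs (fun t _ => abs_nonneg (g₁ t - g₂ t)) fun t ht => by
      rw [h₁ t ht, h₂ t ht]
      exact abs_integral_comp_sub_mul_sub_le hα₀ (continuousOn_const.mul
        ((continuousOn_mlf hα₀ hα.2 lam).mono Ioc_subset_Ioi_self))
        (fun u hu => abs_one_div_mul_mlf_le hα₀ hα.2 lam hu) (by fun_prop) (by fun_prop)
        (h₁c.sub h₂c).abs hLip ht
  exact fun t ht => sub_eq_zero.1 (abs_eq_zero.1 (hdiff ht))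

/-- Uniqueness of continuous solutions on `[0,t₀]` of the Volterra–Riccati equation
`g(t) = ∫_0^t (1/λ) f^{α,λ}(t−s)(a + (ν²/2) g(s)²) ds`. -/
theorem volterra_riccati_unique (α lam ν a t₀ : ℝ) (hα : α ∈ Ioo (1/2 : ℝ) 1)
    (hlam : 0 < lam) (hν : 0 < ν) (ht₀ : 0 < t₀)
    (g₁ g₂ : ℝ → ℝ) (h₁c : ContinuousOn g₁ (Icc 0 t₀)) (h₂c : ContinuousOn g₂ (Icc 0 t₀))
    (h₁ : ∀ t ∈ Icc (0:ℝ) t₀,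
      g₁ t = ∫ s in (0:ℝ)..t, (1 / lam) * mlf α lam (t - s) * (a + ν ^ 2 / 2 * g₁ s ^ 2))
    (h₂ : ∀ t ∈ Icc (0:ℝ) t₀,
      g₂ t = ∫ s in (0:ℝ)..t, (1 / lam) * mlf α lam (t - s) * (a + ν ^ 2 / 2 * g₂ s ^ 2)) :
    EqOn g₁ g₂ (Icc 0 t₀) :=
  volterra_riccati_unique_general α lam ν a t₀ hα ht₀ g₁ g₂ h₁c h₂c h₁ h₂
end
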